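/- arXiv:1505.06657 — 2 statements merged into one kernel-verified Lean document; each statement's English description precedes it below -/
import Mathlib

section
/- For radii: with ρ(z) = (1−|z|²)/2 and d(z₁,z₂) = |z₁−z₂|/(√ρ(z₁)+√ρ(z₂)+√|z₁−z₂|), there exists a constant C ≥ 1 such that for all r > 0 and all z in the closed unit ball, the Euclidean ball of radius r(r+√ρ(z)) around z intersected with the closed unit ball is contained in the d-ball B_r^d(z) = {z' : d(z,z') < r}, and B_r^d(z) is contained in the Euclidean ball of radius C·r(r+√ρ(z)) around z intersected with the closed unit ball. -/
/-!
Write `t = |z - z'|`, `s = √t`, `a = √ρ(z)`, `b = √ρ(z')`; for `z' ≠ z`, `d(z, z') < r` means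
`t < r (a + b + s)`. If `t < r (r + a)` this holds: when `s ≥ r`, `t < r (s + a)`, and when `s < r`,
`t < r s`. Conversely, `ρ(z') ≤ ρ(z) + t` gives `b ≤ a + s`, so `t < 2 r (a + s)`, which forces
`s < 2r + a` and hence `t < 4 r (r + a)`.
-/

/-- The weight `ρ(z) = (1 - |z|²)/2`. -/
noncomputable def rho {N : ℕ} (z : EuclideanSpace ℝ (Fin N)) : ℝ := (1 - ‖z‖ ^ 2) / 2

/-- The semimetric `d(z₁,z₂) = |z₁ - z₂| / (√ρ(z₁) + √ρ(z₂) + √|z₁-z₂|)`. -/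
noncomputable def hcdist {N : ℕ} (z₁ z₂ : EuclideanSpace ℝ (Fin N)) : ℝ :=
  ‖z₁ - z₂‖ / (Real.sqrt (rho z₁) + Real.sqrt (rho z₂) + Real.sqrt ‖z₁ - z₂‖)

/-- The intrinsic ball `B_r^d(z)`: points of the closed unit ball at `d`-distance `< r` from `z`. -/
noncomputable def dBall {N : ℕ} (z : EuclideanSpace ℝ (Fin N)) (r : ℝ) :
    Set (EuclideanSpace ℝ (Fin N)) :=
  {z' ∈ Metric.closedBall (0 : EuclideanSpace ℝ (Fin N)) 1 | hcdist z z' < r}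

section RealInequalities

variable {r a b s : ℝ}

theorem sq_lt_mul_add_add_of_sq_lt_mul_add (hr : 0 < r) (ha : 0 ≤ a) (hb : 0 ≤ b) (hs : 0 < s)
    (h : s ^ 2 < r * (r + a)) : s ^ 2 < r * (a + b + s) := by
  rcases le_or_gt r s with hrs | hsr <;> nlinarith

/-- From `s² < 2r(a + s)` one gets `(s - r)² < (r + a)²`, i.e. `s < 2r + a`. -/
theorem sq_lt_four_mul_of_sq_lt_two_mul (hr : 0 ≤ r) (ha : 0 ≤ a) (hs : 0 ≤ s)
    (h : s ^ 2 < 2 * r * (a + s)) : s ^ 2 < 4 * r * (r + a) := by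
  have hs_lt : s < 2 * r + a := by nlinarith
  nlinarith

end RealInequalities

section Weight

variable {N : ℕ} {z z' : EuclideanSpace ℝ (Fin N)}

theorem rho_nonneg (hz : ‖z‖ ≤ 1) : 0 ≤ rho z := by
  unfold rho
  nlinarith [norm_nonneg z]

theorem rho_le_rho_add_norm_sub (hz : ‖z‖ ≤ 1) (hz' : ‖z'‖ ≤ 1) :
    rho z' ≤ rho z + ‖z - z'‖ := by
  have hdiff : ‖z‖ - ‖z'‖ ≤ ‖z - z'‖ := norm_sub_norm_le z z'
  unfold rho
  nlinarith [norm_nonneg z, norm_nonneg z', norm_nonneg (z - z'),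
    mul_nonneg (sub_nonneg.mpr hdiff) (add_nonneg (norm_nonneg z) (norm_nonneg z'))]

theorem sqrt_rho_le_sqrt_rho_add_sqrt_norm_sub (hz : ‖z‖ ≤ 1) (hz' : ‖z'‖ ≤ 1) :
    √(rho z') ≤ √(rho z) + √‖z - z'‖ := by
  rw [Real.sqrt_le_left (by positivity), add_sq, Real.sq_sqrt (rho_nonneg hz),
    Real.sq_sqrt (norm_nonneg _)]
  nlinarith [rho_le_rho_add_norm_sub hz hz', Real.sqrt_nonneg (rho z), Real.sqrt_nonneg ‖z - z'‖]

theorem hcdist_self (z : EuclideanSpace ℝ (Fin N)) : hcdist z z = 0 := by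
  simp [hcdist]

theorem hcdist_lt_iff_of_ne (hzz' : z ≠ z') {r : ℝ} :
    hcdist z z' < r ↔ ‖z - z'‖ < r * (√(rho z) + √(rho z') + √‖z - z'‖) := by
  have hs : 0 < √‖z - z'‖ := Real.sqrt_pos.mpr (norm_pos_iff.mpr (sub_ne_zero.mpr hzz'))
  exact div_lt_iff₀ (by positivity)

end Weight

section Balls

variable {N : ℕ} {z : EuclideanSpace ℝ (Fin N)} {r : ℝ}

theorem ball_inter_closedBall_subset_dBall (hr : 0 < r) :
    Metric.ball z (r * (r + √(rho z))) ∩ Metric.closedBall 0 1 ⊆ dBall z r := by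
  rintro z' ⟨hball, hz'⟩
  refine ⟨hz', ?_⟩
  by_cases hzz' : z = z'
  · simpa [← hzz', hcdist_self] using hr
  rw [hcdist_lt_iff_of_ne hzz']
  have hs : 0 < √‖z - z'‖ := Real.sqrt_pos.mpr (norm_pos_iff.mpr (sub_ne_zero.mpr hzz'))
  have key := sq_lt_mul_add_add_of_sq_lt_mul_add hr (Real.sqrt_nonneg (rho z))
    (Real.sqrt_nonneg (rho z')) hs
    (by rwa [Real.sq_sqrt (norm_nonneg _), ← dist_eq_norm, dist_comm])
  rwa [Real.sq_sqrt (norm_nonneg _)] at key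

theorem dBall_subset_ball (hr : 0 < r) (hz : ‖z‖ ≤ 1) :
    dBall z r ⊆ Metric.ball z (4 * r * (r + √(rho z))) := by
  rintro z' ⟨hz', hd⟩
  rw [Metric.mem_ball, dist_comm, dist_eq_norm]
  by_cases hzz' : z = z'
  · simp only [hzz', sub_self, norm_zero]
    positivity
  have hlt := (hcdist_lt_iff_of_ne hzz').mp hd
  have hb := sqrt_rho_le_sqrt_rho_add_sqrt_norm_sub hz (mem_closedBall_zero_iff.mp hz')
  have key := sq_lt_four_mul_of_sq_lt_two_mul hr.le (Real.sqrt_nonneg (rho z))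
    (Real.sqrt_nonneg ‖z - z'‖) (by rw [Real.sq_sqrt (norm_nonneg _)]; nlinarith)
  rwa [Real.sq_sqrt (norm_nonneg _)] at key

end Balls

/-- There is `C ≥ 1` such that for all `r > 0` and `z` in the closed unit ball,
the Euclidean ball of radius `r(r + √ρ(z))` around `z`, intersected with the closed unit ball,
is contained in `B_r^d(z)`, which in turn is contained in the Euclidean ball of radius
`C r(r + √ρ(z))` around `z`, intersected with the closed unit ball. -/
theorem dBall_comparison (N : ℕ) :
    ∃ C : ℝ, 1 ≤ C ∧ ∀ r : ℝ, 0 < r →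
      ∀ z ∈ Metric.closedBall (0 : EuclideanSpace ℝ (Fin N)) 1,
        (Metric.ball z (r * (r + Real.sqrt (rho z))) ∩
            Metric.closedBall (0 : EuclideanSpace ℝ (Fin N)) 1 ⊆ dBall z r) ∧
        (dBall z r ⊆ Metric.ball z (C * r * (r + Real.sqrt (rho z))) ∩
            Metric.closedBall (0 : EuclideanSpace ℝ (Fin N)) 1) := by
  refine ⟨4, by norm_num, fun r hr z hz => ?_⟩
  have hz1 : ‖z‖ ≤ 1 := mem_closedBall_zero_iff.mp hz
  exact ⟨ball_inter_closedBall_subset_dBall hr,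
    fun z' hz' => ⟨dBall_subset_ball hr hz1 hz', hz'.1⟩⟩
end

section
/- (One-dimensional weighted Morrey/Hardy bound) Let σ > −1, let p ∈ N₀ satisfy 0 ≤ σ + 1 − p < 1, set q = σ + 1 − p, and let δ ∈ (0,1). Then there is a constant C (depending on σ, δ) such that for every smooth function v : [0, 2δ] → R and every z ∈ [0, δ], |v(z)|² ≤ C Σ_{n=0}^{max{p,1}} ∫₀^{2δ} (v^{(n)}(s))² s^σ ds. -/
open MeasureTheory Set intervalIntegral
set_option maxHeartbeats 1000000
set_option maxRecDepth 8000

lemma two_pow_le_two_mul_factorial (k : ℕ) : (2:ℝ)^k ≤ 2 * (k.factorial : ℝ) := by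
  induction k with
  | zero => norm_num
  | succ k ih =>
    rcases Nat.eq_zero_or_pos k with rfl|hk
    · norm_num [Nat.factorial]
    · have h2 : (2:ℝ) ≤ ((k:ℝ)+1) := by exact_mod_cast Nat.succ_le_succ hk
      have hf : (0:ℝ) < (k.factorial : ℝ) := by exact_mod_cast Nat.factorial_pos k
      have hp : (0:ℝ) ≤ (2:ℝ)^k := by positivity
      calc (2:ℝ)^(k+1) = 2 * 2^k := by ring
      _ ≤ 2 * (2 * (k.factorial:ℝ)) := by nlinarith
      _ ≤ 2 * (((k:ℝ)+1) * (k.factorial:ℝ)) := by nlinarith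
      _ = 2 * ((k+1).factorial : ℝ) := by rw [Nat.factorial_succ]; push_cast; ring

lemma hasDerivAt_iteratedDeriv' {v : ℝ → ℝ} (hv : ContDiff ℝ (⊤ : ℕ∞) v) (n : ℕ) (x : ℝ) :
    HasDerivAt (iteratedDeriv n v) (iteratedDeriv (n+1) v x) x := by
  have h := (hv.differentiable_iteratedDeriv n (by
    exact_mod_cast ENat.coe_lt_top n)).differentiableAt (x := x)
  simpa [iteratedDeriv_succ] using h.hasDerivAt

lemma measurable_rpow_const' (c : ℝ) : Measurable (fun u : ℝ => u ^ c) := by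
  measurability

lemma cs_integral {a b : ℝ} (hab : a ≤ b) (f g : ℝ → ℝ)
    (hfm : AEStronglyMeasurable f (volume.restrict (Set.Ioc a b)))
    (hgm : AEStronglyMeasurable g (volume.restrict (Set.Ioc a b)))
    (hf2 : IntervalIntegrable (fun x => f x ^ 2) volume a b)
    (hg2 : IntervalIntegrable (fun x => g x ^ 2) volume a b) :
    (∫ x in a..b, |f x| * |g x|) ^ 2 ≤
      (∫ x in a..b, f x ^ 2) * ∫ x in a..b, g x ^ 2 := by
  rw [intervalIntegral.integral_of_le hab, intervalIntegral.integral_of_le hab,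
    intervalIntegral.integral_of_le hab]
  set μ := volume.restrict (Set.Ioc a b) with hμ
  have hpq : Real.HolderConjugate 2 2 := Real.holderConjugate_iff.mpr ⟨one_lt_two, by norm_num⟩
  have hfL : MemLp f 2 μ := (memLp_two_iff_integrable_sq hfm).2 (hf2.1)
  have hgL : MemLp g 2 μ := (memLp_two_iff_integrable_sq hgm).2 (hg2.1)
  have key := integral_mul_le_Lp_mul_Lq_of_nonneg hpq
    (f := fun x => |f x|) (g := fun x => |g x|)
    (Filter.Eventually.of_forall fun x => abs_nonneg _)
    (Filter.Eventually.of_forall fun x => abs_nonneg _)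
    (by rw [ENNReal.ofReal_ofNat]; exact hfL.abs)
    (by rw [ENNReal.ofReal_ofNat]; exact hgL.abs)
  have hXeq : (∫ x, |f x| ^ (2:ℝ) ∂μ) = ∫ x, f x ^ 2 ∂μ := by
    refine integral_congr_ae (Filter.Eventually.of_forall fun x => ?_)
    show |f x| ^ ((2:ℝ)) = f x ^ 2
    rw [show ((2:ℝ)) = ((2:ℕ):ℝ) by norm_num, Real.rpow_natCast, sq_abs]
  have hYeq : (∫ x, |g x| ^ (2:ℝ) ∂μ) = ∫ x, g x ^ 2 ∂μ := by
    refine integral_congr_ae (Filter.Eventually.of_forall fun x => ?_)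
    show |g x| ^ ((2:ℝ)) = g x ^ 2
    rw [show ((2:ℝ)) = ((2:ℕ):ℝ) by norm_num, Real.rpow_natCast, sq_abs]
  rw [hXeq, hYeq] at key
  have hX : (0:ℝ) ≤ ∫ x, f x ^ 2 ∂μ := integral_nonneg fun x => sq_nonneg _
  have hY : (0:ℝ) ≤ ∫ x, g x ^ 2 ∂μ := integral_nonneg fun x => sq_nonneg _
  have hL : (0:ℝ) ≤ ∫ x, |f x| * |g x| ∂μ :=
    integral_nonneg fun x => mul_nonneg (abs_nonneg _) (abs_nonneg _)
  calc (∫ x, |f x| * |g x| ∂μ) ^ 2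
      ≤ ((∫ x, f x ^ 2 ∂μ) ^ ((1:ℝ)/2) * (∫ x, g x ^ 2 ∂μ) ^ ((1:ℝ)/2)) ^ 2 := by
        apply pow_le_pow_left₀ hL key
    _ = (∫ x, f x ^ 2 ∂μ) * ∫ x, g x ^ 2 ∂μ := by
        rw [mul_pow, ← Real.rpow_natCast (_ ^ ((1:ℝ)/2)) 2, ← Real.rpow_natCast (_ ^ ((1:ℝ)/2)) 2,
          ← Real.rpow_mul hX, ← Real.rpow_mul hY]
        norm_num

lemma taylor_exp {v : ℝ → ℝ} (hv : ContDiff ℝ (⊤ : ℕ∞) v) (z t : ℝ) (M : ℕ) :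
    v z = (∑ k ∈ Finset.range (M+1), iteratedDeriv k v t * (z - t)^k / (k.factorial : ℝ))
      + ∫ u in t..z, (z - u)^M / (M.factorial : ℝ) * iteratedDeriv (M+1) v u := by
  have hcont : ∀ n : ℕ, Continuous (iteratedDeriv n v) :=
    fun n => hv.continuous_iteratedDeriv n (by exact_mod_cast le_top)
  induction M with
  | zero =>
    have h1 : (∫ u in t..z, (z - u)^0 / ((Nat.factorial 0 : ℕ) : ℝ) * iteratedDeriv 1 v u)
        = ∫ u in t..z, deriv v u := by
      simp [iteratedDeriv_one]
    have h2 : (∫ u in t..z, deriv v u) = v z - v t := by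
      apply intervalIntegral.integral_deriv_eq_sub
      · exact fun x _ => (hv.differentiable (by norm_num)).differentiableAt
      · exact ((hv.continuous_iteratedDeriv 1 (by simp)).congr
          (by simp [iteratedDeriv_one])).intervalIntegrable t z
    rw [h1, h2]; simp
  | succ M ih =>
    rw [Finset.sum_range_succ, ih]
    have hfact : ((M+1).factorial : ℝ) = ((M:ℝ)+1) * (M.factorial : ℝ) := by
      rw [Nat.factorial_succ]; push_cast; ring
    have hMf : ((M.factorial : ℕ) : ℝ) ≠ 0 := by exact_mod_cast (Nat.factorial_pos M).ne'
    have hM1f : (((M+1).factorial : ℕ) : ℝ) ≠ 0 := by exact_mod_cast (Nat.factorial_pos (M+1)).ne'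
    set U : ℝ → ℝ := fun x => -((z - x)^(M+1)) / (((M+1).factorial : ℕ) : ℝ) with hU
    set U' : ℝ → ℝ := fun x => (z - x)^M / ((M.factorial : ℕ) : ℝ) with hU'
    have hUderiv : ∀ x ∈ Set.uIcc t z, HasDerivAt U (U' x) x := by
      intro x _
      have h0 : HasDerivAt (fun x : ℝ => z - x) (-1) x := (hasDerivAt_id x).const_sub z
      have h1 : HasDerivAt (fun x : ℝ => (z - x)^(M+1))
          (((M+1:ℕ)) * (z - x)^M * (-1)) x := h0.pow (M+1)
      have h2 := (h1.neg).div_const (((M+1).factorial : ℕ) : ℝ)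
      convert h2 using 1
      · rfl
      · rfl
      · rfl
      rw [hfact]; push_cast; simp only [hU']; field_simp
    have hVderiv : ∀ x ∈ Set.uIcc t z,
        HasDerivAt (iteratedDeriv (M+1) v) (iteratedDeriv (M+2) v x) x :=
      fun x _ => hasDerivAt_iteratedDeriv' hv (M+1) x
    have hU'int : IntervalIntegrable U' volume t z := by
      apply Continuous.intervalIntegrable; fun_prop
    have hV'int : IntervalIntegrable (iteratedDeriv (M+2) v) volume t z :=
      (hcont (M+2)).intervalIntegrable t z
    have parts := intervalIntegral.integral_mul_deriv_eq_deriv_mul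
      hUderiv hVderiv hU'int hV'int
    have key : (∫ u in t..z, U' u * iteratedDeriv (M+1) v u)
        = U z * iteratedDeriv (M+1) v z - U t * iteratedDeriv (M+1) v t
          - ∫ u in t..z, U u * iteratedDeriv (M+2) v u := by linarith [parts]
    have hUz : U z = 0 := by simp [hU]
    have hnegint : (∫ u in t..z, U u * iteratedDeriv (M+2) v u)
        = - ∫ u in t..z, (z - u)^(M+1) / (((M+1).factorial : ℕ) : ℝ) * iteratedDeriv (M+2) v u := by
      rw [← intervalIntegral.integral_neg]
      congr 1; funext u; simp [hU]; ring
    have key2 : (∫ u in t..z, (z - u)^M / ((M.factorial : ℕ) : ℝ) * iteratedDeriv (M+1) v u)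
        = iteratedDeriv (M+1) v t * (z - t)^(M+1) / (((M+1).factorial : ℕ) : ℝ)
          + ∫ u in t..z, (z - u)^(M+1) / (((M+1).factorial : ℕ) : ℝ) * iteratedDeriv (M+2) v u := by
      rw [show (∫ u in t..z, (z - u)^M / ((M.factorial : ℕ) : ℝ) * iteratedDeriv (M+1) v u)
          = ∫ u in t..z, U' u * iteratedDeriv (M+1) v u from rfl, key, hUz, hnegint, hU]
      ring
    rw [key2]; ring

/-- One-dimensional weighted Morrey/Hardy bound: let `σ > -1`, let `p ∈ ℕ` with
`0 ≤ σ + 1 - p < 1`, and let `δ ∈ (0,1)`. Then there is `C` (depending on `σ, δ`) such that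
for every smooth `v : ℝ → ℝ` and every `z ∈ [0, δ]`,
`v(z)² ≤ C Σ_{n=0}^{max{p,1}} ∫₀^{2δ} (v^{(n)}(s))² s^σ ds`. -/
theorem weighted_morrey_hardy_1d (σ : ℝ) (hσ : -1 < σ) (p : ℕ)
    (hp0 : 0 ≤ σ + 1 - p) (hp1 : σ + 1 - p < 1)
    (δ : ℝ) (hδ : δ ∈ Set.Ioo (0 : ℝ) 1) :
    ∃ C > (0 : ℝ), ∀ v : ℝ → ℝ, ContDiff ℝ (⊤ : ℕ∞) v → ∀ z ∈ Set.Icc (0 : ℝ) δ,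
      (v z) ^ 2 ≤ C * ∑ n ∈ Finset.range (max p 1 + 1),
        ∫ s in (0 : ℝ)..(2 * δ), (iteratedDeriv n v s) ^ 2 * s ^ σ := by
  obtain ⟨hδ0, hδ1⟩ := hδ
  set M : ℕ := max p 1 - 1 with hMdef
  have hm1 : 1 ≤ max p 1 := le_max_right p 1
  have hmM : max p 1 = M + 1 := by omega
  have hσM : σ < (M:ℝ) + 1 := by
    have h1 : (p:ℝ) ≤ (max p 1 : ℕ) := by exact_mod_cast le_max_left p 1
    have h2 : ((max p 1 : ℕ) : ℝ) = (M:ℝ) + 1 := by exact_mod_cast hmM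
    nlinarith
  have hMnn : (0:ℝ) ≤ (M:ℝ) := Nat.cast_nonneg M
  have hexp : (-1:ℝ) < 2*(M:ℝ) - σ := by linarith
  set wσ : ℝ := max (δ ^ (-σ)) ((2*δ) ^ (-σ)) with hwσ
  have hwσ0 : 0 < wσ := lt_max_of_lt_left (Real.rpow_pos_of_pos hδ0 _)
  set cQ : ℝ := ∫ u in (0:ℝ)..(2*δ), u ^ (2*(M:ℝ) - σ) with hcQ
  have hcQ0 : 0 ≤ cQ := intervalIntegral.integral_nonneg (by linarith)
    (fun u hu => Real.rpow_nonneg hu.1 _)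
  refine ⟨(4/δ^2) * (2*((M:ℝ)+1)*(δ*wσ) + 2*cQ) + 1, by positivity, ?_⟩
  intro v hv z hz
  obtain ⟨hz0, hzδ⟩ := hz
  have hcont : ∀ n : ℕ, Continuous (iteratedDeriv n v) :=
    fun n => hv.continuous_iteratedDeriv n (by exact_mod_cast le_top)
  set W : ℕ → ℝ := fun n => ∫ s in (0:ℝ)..(2*δ), (iteratedDeriv n v s)^2 * s ^ σ with hWdef
  have hWint : ∀ n, IntervalIntegrable (fun s => (iteratedDeriv n v s)^2 * s ^ σ)
      volume 0 (2*δ) := fun n =>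
    (intervalIntegral.intervalIntegrable_rpow' hσ).continuousOn_mul
      (((hcont n).pow 2).continuousOn)
  have hWnn : ∀ n, 0 ≤ W n := fun n => intervalIntegral.integral_nonneg (by linarith)
    (fun u hu => mul_nonneg (sq_nonneg _) (Real.rpow_nonneg hu.1 _))
  set P : ℕ → ℝ := fun k => ∫ t in δ..(2*δ), |iteratedDeriv k v t| with hPdef
  have hPnn : ∀ k, 0 ≤ P k := fun k => intervalIntegral.integral_nonneg (by linarith)
    (fun u _ => abs_nonneg _)
  have hQcont : Continuous (fun u : ℝ => u ^ M * |iteratedDeriv (M+1) v u|) :=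
    (continuous_pow M).mul (hcont (M+1)).abs
  set Q : ℝ := ∫ u in (0:ℝ)..(2*δ), u^M * |iteratedDeriv (M+1) v u| with hQdef
  have hQnn : 0 ≤ Q := intervalIntegral.integral_nonneg (by linarith)
    (fun u hu => mul_nonneg (pow_nonneg hu.1 M) (abs_nonneg _))
  have hQint : IntervalIntegrable (fun u : ℝ => u ^ M * |iteratedDeriv (M+1) v u|)
      volume 0 (2*δ) := hQcont.intervalIntegrable _ _
  -- Step A1 : pointwise bound for each base point t
  have hA1 : ∀ t ∈ Set.Icc δ (2*δ), |v z| ≤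
      (∑ k ∈ Finset.range (M+1), 2 * |iteratedDeriv k v t|) + Q := by
    intro t ht
    have hzt : z ≤ t := hzδ.trans ht.1
    have ht2 : t ≤ 2*δ := ht.2
    have hid := taylor_exp hv z t M
    have habs : |v z| ≤ (∑ k ∈ Finset.range (M+1),
        |iteratedDeriv k v t * (z-t)^k / (k.factorial:ℝ)|)
        + |∫ u in t..z, (z-u)^M/(M.factorial:ℝ) * iteratedDeriv (M+1) v u| := by
      rw [hid]
      exact (abs_add_le _ _).trans (by gcongr; exact Finset.abs_sum_le_sum_abs _ _)
    have hterm : ∀ k ∈ Finset.range (M+1),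
        |iteratedDeriv k v t * (z-t)^k / (k.factorial:ℝ)| ≤ 2 * |iteratedDeriv k v t| := by
      intro k _
      have hkf : (0:ℝ) < (k.factorial : ℝ) := by exact_mod_cast Nat.factorial_pos k
      rw [abs_div, abs_mul, abs_pow, abs_of_pos hkf]
      have h1 : |z - t| ≤ 2 := by
        rw [abs_sub_comm, abs_of_nonneg (by linarith)]; linarith
      have h2 : |z-t|^k ≤ 2^k := pow_le_pow_left₀ (abs_nonneg _) h1 k
      have h3 := two_pow_le_two_mul_factorial k
      rw [div_le_iff₀ hkf]
      calc |iteratedDeriv k v t| * |z-t|^k ≤ |iteratedDeriv k v t| * (2 * (k.factorial:ℝ)) := by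
            apply mul_le_mul_of_nonneg_left (h2.trans h3) (abs_nonneg _)
        _ = 2 * |iteratedDeriv k v t| * (k.factorial:ℝ) := by ring
    have hrem : |∫ u in t..z, (z-u)^M/(M.factorial:ℝ) * iteratedDeriv (M+1) v u| ≤ Q := by
      rw [intervalIntegral.integral_symm z t, abs_neg]
      have hMf1 : (1:ℝ) ≤ (M.factorial : ℝ) := by exact_mod_cast Nat.one_le_iff_ne_zero.2 (Nat.factorial_pos M).ne'
      calc |∫ u in z..t, (z-u)^M/(M.factorial:ℝ) * iteratedDeriv (M+1) v u|
          ≤ ∫ u in z..t, |(z-u)^M/(M.factorial:ℝ) * iteratedDeriv (M+1) v u| :=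
            intervalIntegral.abs_integral_le_integral_abs hzt
        _ ≤ ∫ u in z..t, u^M * |iteratedDeriv (M+1) v u| := by
            apply intervalIntegral.integral_mono_on hzt
            · apply Continuous.intervalIntegrable; fun_prop
            · exact hQcont.intervalIntegrable _ _
            · intro u hu
              rw [abs_mul, abs_div, abs_pow, abs_of_pos (by linarith : (0:ℝ) < (M.factorial:ℝ))]
              have hu0 : 0 ≤ u - z := by linarith [hu.1]
              have huz : |z - u| ≤ u := by
                rw [abs_sub_comm, abs_of_nonneg hu0]; linarith
              have : |z-u|^M ≤ u^M := pow_le_pow_left₀ (abs_nonneg _) huz M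
              calc |z-u|^M / (M.factorial:ℝ) * |iteratedDeriv (M+1) v u|
                  ≤ |z-u|^M / 1 * |iteratedDeriv (M+1) v u| := by gcongr
                _ = |z-u|^M * |iteratedDeriv (M+1) v u| := by ring
                _ ≤ u^M * |iteratedDeriv (M+1) v u| := by
                    apply mul_le_mul_of_nonneg_right this (abs_nonneg _)
        _ ≤ Q := by
            apply intervalIntegral.integral_mono_interval hz0 hzt ht2 _ hQint
            refine (ae_restrict_iff' measurableSet_Ioc).2
              (Filter.Eventually.of_forall fun u hu => ?_)
            exact mul_nonneg (pow_nonneg hu.1.le M) (abs_nonneg _)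
    calc |v z| ≤ _ := habs
      _ ≤ (∑ k ∈ Finset.range (M+1), 2 * |iteratedDeriv k v t|) + Q :=
          add_le_add (Finset.sum_le_sum hterm) hrem
  -- Step A2 : average over t
  have hsumcont : Continuous (fun t : ℝ =>
      (∑ k ∈ Finset.range (M+1), 2 * |iteratedDeriv k v t|) + Q) := by
    apply Continuous.add _ continuous_const
    exact continuous_finset_sum _ fun k _ => continuous_const.mul (hcont k).abs
  have hmono := intervalIntegral.integral_mono_on (by linarith : δ ≤ 2*δ)
    (_root_.intervalIntegrable_const (c := |v z|) (μ := volume) (a := δ) (b := 2*δ))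
    (hsumcont.intervalIntegrable _ _) hA1
  rw [intervalIntegral.integral_const, smul_eq_mul] at hmono
  have hRHS : (∫ t in δ..(2*δ),
      ((∑ k ∈ Finset.range (M+1), 2 * |iteratedDeriv k v t|) + Q))
      = (∑ k ∈ Finset.range (M+1), 2 * P k) + δ * Q := by
    rw [intervalIntegral.integral_add
      ((continuous_finset_sum _ fun k _ => continuous_const.mul (hcont k).abs : Continuous fun t : ℝ => ∑ k ∈ Finset.range (M+1), 2 * |iteratedDeriv k v t|).intervalIntegrable _ _)
      (_root_.intervalIntegrable_const (c := Q) (μ := volume) (a := δ) (b := 2*δ)),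
      intervalIntegral.integral_finset_sum (f := fun k t => 2 * |iteratedDeriv k v t|)
        (fun k _ => (continuous_const.mul (hcont k).abs : Continuous fun t : ℝ => 2 * |iteratedDeriv k v t|).intervalIntegrable _ _),
      intervalIntegral.integral_const, smul_eq_mul]
    congr 1
    · exact Finset.sum_congr rfl fun k _ => intervalIntegral.integral_const_mul 2 _
    · ring
  rw [hRHS] at hmono
  set S : ℝ := ∑ k ∈ Finset.range (M+1), P k with hSdef
  have hSnn : 0 ≤ S := Finset.sum_nonneg fun k _ => hPnn k
  have hstepA : |v z| ≤ (2/δ) * (S + Q) := by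
    rw [div_mul_eq_mul_div, le_div_iff₀ hδ0]
    have hsum2 : (∑ k ∈ Finset.range (M+1), 2 * P k) = 2 * S := by
      rw [hSdef, Finset.mul_sum]
    nlinarith [hmono]
  -- Step C : P k ^ 2 ≤ (δ * wσ) * W k
  have hWrest : ∀ k, (∫ t in δ..(2*δ), (iteratedDeriv k v t)^2 * t ^ σ) ≤ W k := by
    intro k
    apply intervalIntegral.integral_mono_interval hδ0.le (by linarith : δ ≤ 2*δ) le_rfl _ (hWint k)
    refine (ae_restrict_iff' measurableSet_Ioc).2 (Filter.Eventually.of_forall fun u hu => ?_)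
    exact mul_nonneg (sq_nonneg _) (Real.rpow_nonneg hu.1.le _)
  have hC : ∀ k, (P k)^2 ≤ (δ * wσ) * W k := by
    intro k
    have hcs := cs_integral (by linarith : δ ≤ 2*δ) (fun t => iteratedDeriv k v t)
      (fun _ => (1:ℝ)) ((hcont k).aestronglyMeasurable.restrict)
      aestronglyMeasurable_const
      (((hcont k).pow 2).intervalIntegrable _ _) intervalIntegrable_const
    have h1 : (∫ t in δ..(2*δ), |iteratedDeriv k v t| * |(1:ℝ)|) = P k := by
      simp [hPdef]
    have h2 : (∫ t in δ..(2*δ), ((1:ℝ))^2) = δ := by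
      simp [intervalIntegral.integral_const]; ring
    rw [h1, h2] at hcs
    have hint2 : IntervalIntegrable (fun t => (iteratedDeriv k v t)^2 * t ^ σ)
        volume δ (2*δ) := by
      apply (hWint k).mono_set
      rw [Set.uIcc_of_le (by linarith : δ ≤ 2*δ), Set.uIcc_of_le (by linarith : (0:ℝ) ≤ 2*δ)]
      exact Set.Icc_subset_Icc (by linarith) le_rfl
    have hpt : ∀ t ∈ Set.Icc δ (2*δ),
        (iteratedDeriv k v t)^2 ≤ wσ * ((iteratedDeriv k v t)^2 * t ^ σ) := by
      intro t ht
      have ht0 : 0 < t := lt_of_lt_of_le hδ0 ht.1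
      have htp : 0 < t ^ σ := Real.rpow_pos_of_pos ht0 σ
      have htσ : t ^ (-σ) ≤ wσ := by
        rcases le_or_gt σ 0 with h|h
        · exact le_max_of_le_right
            (Real.rpow_le_rpow (by linarith [ht.1] : (0:ℝ) ≤ t) ht.2 (by linarith))
        · exact le_max_of_le_left (Real.rpow_le_rpow_of_nonpos hδ0 ht.1 (by linarith))
      have h1' : 1 ≤ wσ * t ^ σ := by
        rw [Real.rpow_neg ht0.le] at htσ
        calc (1:ℝ) = (t^σ)⁻¹ * t^σ := (inv_mul_cancel₀ htp.ne').symm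
          _ ≤ wσ * t^σ := mul_le_mul_of_nonneg_right htσ htp.le
      nlinarith [sq_nonneg (iteratedDeriv k v t)]
    have hmono2 := intervalIntegral.integral_mono_on (by linarith : δ ≤ 2*δ)
      (((hcont k).pow 2).intervalIntegrable _ _) (hint2.const_mul wσ) hpt
    rw [intervalIntegral.integral_const_mul] at hmono2
    calc (P k)^2 ≤ (∫ t in δ..(2*δ), (iteratedDeriv k v t)^2) * δ := hcs
      _ ≤ (wσ * ∫ t in δ..(2*δ), (iteratedDeriv k v t)^2 * t ^ σ) * δ :=
          mul_le_mul_of_nonneg_right hmono2 hδ0.le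
      _ ≤ (wσ * W k) * δ :=
          mul_le_mul_of_nonneg_right
            (mul_le_mul_of_nonneg_left (hWrest k) hwσ0.le) hδ0.le
      _ = (δ * wσ) * W k := by ring
  -- Step D : Q ^ 2 ≤ cQ * W (M+1)
  have hD : Q^2 ≤ cQ * W (M+1) := by
    set F : ℝ → ℝ := fun u => iteratedDeriv (M+1) v u * u ^ (σ/2) with hF
    set G : ℝ → ℝ := fun u => u ^ ((M:ℝ) - σ/2) with hG
    have hrpm : ∀ c : ℝ, Measurable (fun u : ℝ => u ^ c) := measurable_rpow_const'
    have hFm : AEStronglyMeasurable F (volume.restrict (Set.Ioc 0 (2*δ))) :=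
      (((hcont (M+1)).measurable.mul (hrpm (σ/2)))).aestronglyMeasurable
    have hGm : AEStronglyMeasurable G (volume.restrict (Set.Ioc 0 (2*δ))) :=
      (hrpm ((M:ℝ) - σ/2)).aestronglyMeasurable
    have hEqF : Set.EqOn (fun u => (F u)^2)
        (fun u => (iteratedDeriv (M+1) v u)^2 * u ^ σ) (Set.Ioc 0 (2*δ)) := by
      intro u hu
      have hu0 : (0:ℝ) < u := hu.1
      simp only [hF]
      rw [mul_pow, ← Real.rpow_natCast (u ^ (σ/2)) 2, ← Real.rpow_mul hu0.le]
      norm_num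
    have hEqG : Set.EqOn (fun u => (G u)^2)
        (fun u => u ^ (2*(M:ℝ) - σ)) (Set.Ioc 0 (2*δ)) := by
      intro u hu
      simp only [hG]
      rw [← Real.rpow_natCast (u ^ ((M:ℝ) - σ/2)) 2, ← Real.rpow_mul hu.1.le]
      congr 1
      push_cast; ring
    have hF2 : IntervalIntegrable (fun u => (F u)^2) volume 0 (2*δ) := by
      rw [intervalIntegrable_iff_integrableOn_Ioc_of_le (by linarith : (0:ℝ) ≤ 2*δ)]
      exact ((intervalIntegrable_iff_integrableOn_Ioc_of_le
        (by linarith : (0:ℝ) ≤ 2*δ)).1 (hWint (M+1))).congr_fun hEqF.symm measurableSet_Ioc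
    have hG2 : IntervalIntegrable (fun u => (G u)^2) volume 0 (2*δ) := by
      rw [intervalIntegrable_iff_integrableOn_Ioc_of_le (by linarith : (0:ℝ) ≤ 2*δ)]
      exact ((intervalIntegrable_iff_integrableOn_Ioc_of_le
        (by linarith : (0:ℝ) ≤ 2*δ)).1
        (intervalIntegral.intervalIntegrable_rpow' hexp)).congr_fun hEqG.symm measurableSet_Ioc
    have hcs := cs_integral (by linarith : (0:ℝ) ≤ 2*δ) F G hFm hGm hF2 hG2
    have e1 : (∫ u in (0:ℝ)..(2*δ), |F u| * |G u|) = Q := by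
      rw [hQdef, intervalIntegral.integral_of_le (by linarith : (0:ℝ) ≤ 2*δ),
        intervalIntegral.integral_of_le (by linarith : (0:ℝ) ≤ 2*δ)]
      apply setIntegral_congr_fun measurableSet_Ioc
      intro u hu
      have hu0 : (0:ℝ) < u := hu.1
      simp only [hF, hG]
      rw [abs_mul, abs_of_nonneg (Real.rpow_nonneg hu0.le _),
        abs_of_nonneg (Real.rpow_nonneg hu0.le _), mul_assoc,
        ← Real.rpow_add hu0, show σ/2 + ((M:ℝ) - σ/2) = ((M:ℕ):ℝ) by push_cast; ring,
        Real.rpow_natCast, mul_comm]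
    have e2 : (∫ u in (0:ℝ)..(2*δ), (F u)^2) = W (M+1) := by
      show _ = ∫ s in (0:ℝ)..(2*δ), (iteratedDeriv (M+1) v s)^2 * s ^ σ
      rw [intervalIntegral.integral_of_le (by linarith : (0:ℝ) ≤ 2*δ),
        intervalIntegral.integral_of_le (by linarith : (0:ℝ) ≤ 2*δ)]
      exact setIntegral_congr_fun measurableSet_Ioc hEqF
    have e3 : (∫ u in (0:ℝ)..(2*δ), (G u)^2) = cQ := by
      rw [hcQ, intervalIntegral.integral_of_le (by linarith : (0:ℝ) ≤ 2*δ),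
        intervalIntegral.integral_of_le (by linarith : (0:ℝ) ≤ 2*δ)]
      exact setIntegral_congr_fun measurableSet_Ioc hEqG
    rw [e1, e2, e3] at hcs
    linarith
  -- Final assembly
  have hfinal : (v z)^2 ≤ ((4/δ^2) * (2*((M:ℝ)+1)*(δ*wσ) + 2*cQ) + 1)
      * ∑ k ∈ Finset.range (M+2), W k := by
    have hT1 : (∑ k ∈ Finset.range (M+1), W k) ≤ ∑ k ∈ Finset.range (M+2), W k := by
      apply Finset.sum_le_sum_of_subset_of_nonneg (Finset.range_subset_range.2 (by omega))
      intro i _ _; exact hWnn i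
    have hT2 : W (M+1) ≤ ∑ k ∈ Finset.range (M+2), W k :=
      Finset.single_le_sum (fun i _ => hWnn i) (Finset.self_mem_range_succ (M+1))
    have hTnn : 0 ≤ ∑ k ∈ Finset.range (M+2), W k := Finset.sum_nonneg fun i _ => hWnn i
    calc (v z)^2 = |v z|^2 := (sq_abs _).symm
      _ ≤ ((2/δ) * (S+Q))^2 := pow_le_pow_left₀ (abs_nonneg _) hstepA 2
      _ = (4/δ^2) * (S+Q)^2 := by rw [mul_pow, div_pow]; norm_num
      _ ≤ (4/δ^2) * (2*S^2 + 2*Q^2) := by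
          apply mul_le_mul_of_nonneg_left _ (by positivity)
          nlinarith [sq_nonneg (S-Q)]
      _ ≤ (4/δ^2) * (2*(((M:ℝ)+1) * ∑ k ∈ Finset.range (M+1), (P k)^2) + 2*Q^2) := by
          apply mul_le_mul_of_nonneg_left _ (by positivity)
          have hS2 : S^2 ≤ ((M:ℝ)+1) * ∑ k ∈ Finset.range (M+1), (P k)^2 := by
            have := sq_sum_le_card_mul_sum_sq (s := Finset.range (M+1)) (f := P)
            simpa [Finset.card_range] using this
          nlinarith
      _ ≤ (4/δ^2) * (2*(((M:ℝ)+1) * ∑ k ∈ Finset.range (M+1), (δ*wσ) * W k)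
            + 2*(cQ * W (M+1))) := by
          apply mul_le_mul_of_nonneg_left _ (by positivity)
          have h1 : (∑ k ∈ Finset.range (M+1), (P k)^2)
              ≤ ∑ k ∈ Finset.range (M+1), (δ*wσ) * W k :=
            Finset.sum_le_sum fun k _ => hC k
          nlinarith [hD, hMnn]
      _ = (4/δ^2) * (2*((M:ℝ)+1)*(δ*wσ) * (∑ k ∈ Finset.range (M+1), W k)
            + 2*cQ * W (M+1)) := by
          rw [← Finset.mul_sum]; ring
      _ ≤ (4/δ^2) * (2*((M:ℝ)+1)*(δ*wσ) * (∑ k ∈ Finset.range (M+2), W k)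
            + 2*cQ * ∑ k ∈ Finset.range (M+2), W k) := by
          apply mul_le_mul_of_nonneg_left _ (by positivity)
          have hc1 : (0:ℝ) ≤ 2*((M:ℝ)+1)*(δ*wσ) := by positivity
          nlinarith [hcQ0]
      _ = ((4/δ^2) * (2*((M:ℝ)+1)*(δ*wσ) + 2*cQ)) * ∑ k ∈ Finset.range (M+2), W k := by
          ring
      _ ≤ ((4/δ^2) * (2*((M:ℝ)+1)*(δ*wσ) + 2*cQ) + 1) * ∑ k ∈ Finset.range (M+2), W k := by
          apply mul_le_mul_of_nonneg_right _ hTnn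
          linarith
  have hrange : max p 1 + 1 = M + 2 := by omega
  rw [hrange]
  exact hfinal
end
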